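/- The quantities I0, I1, I2, I3, I4 defined on words over Φ — where I0(W) counts occurrences of letters L and M in W; I1(W) counts L and P; I2(W) counts L, g, R; I3(W) counts L, g, Q; I4(W) counts L, g, t1, t2, t3, s1, s2 — are invariant under the defining relations of H: if W and W' are words over Φ equivalent under the congruence generated by the non-zero defining relations of H, then I_m(W) = I_m(W') for m = 0,...,4. -/

import Mathlib

inductive Phi
  | L | M | P | Q | R | g | s1 | s2 | t1 | t2 | t3 | a1 | a2 | a3
deriving DecidableEq

open Phi

abbrev W0 := WithZero (FreeMonoid Phi)

def w (l : List Phi) : W0 := ((FreeMonoid.ofList l : FreeMonoid Phi) : W0)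

def ai : Fin 3 → Phi
  | 0 => a1 | 1 => a2 | 2 => a3

def ti : Fin 3 → Phi
  | 0 => t1 | 1 => t2 | 2 => t3

def si : Fin 2 → Phi
  | 0 => s1 | 1 => s2

/-- `x` is one of the letters `a1, a2, a3`. -/
def isA (x : Phi) : Prop := x = a1 ∨ x = a2 ∨ x = a3

/-- The defining relations (1)–(14) of the semigroup `H`. -/
inductive rel : W0 → W0 → Prop
  | r1L (x : Phi) : rel (w [x, L]) 0
  | r1M (x : Phi) : rel (w [x, M]) 0
  | r2 : rel (w [L]) (w [M, P, g])
  | r3 (i : Fin 3) : rel (w [g, ai i]) (w [ai i, g])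
  | r4 (x : Phi) (h : ¬ isA x) : rel (w [g, x]) 0
  | r5 (i j : Fin 3) : rel (w [ai i, g, ai j]) (w [ai i, R, s1, Q, ai j])
  | r6 (i : Fin 3) (x : Phi) (h : x = R ∨ isA x) : rel (w [ti i, x]) (w [x, ti i])
  | r7 (i : Fin 3) : rel (w [P, ai i, ti i]) (w [ai i, P, s1])
  | r8 (i j : Fin 3) (h : i ≠ j) : rel (w [P, ai j, ti i]) (w [ai j, P, s2])
  | r9 (i : Fin 3) (j : Fin 2) : rel (w [si j, ai i]) (w [ai i, si j])
  | r10 : rel (w [s1, R]) (w [R, s1])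
  | r11 (i : Fin 3) : rel (w [s1, Q, ai i]) (w [ti i, ai i, Q])
  | r12 : rel (w [P, R, s1]) 0
  | r13 (i : Fin 3) : rel (w [s2, R, ai i]) (w [ai i, s2, R])
  | r14 (i : Fin 3) : rel (w [s2, R, Q, ai i]) (w [R, ti i, ai i, Q])

/-- The congruence on the free monoid with zero generated by the relations. -/
def hCon : Con W0 := conGen rel

/-- The semigroup (with zero) `H` of the paper. -/
abbrev H := hCon.Quotient

/-- The quotient map. -/
def q : W0 →* H := hCon.mk'

/-- `l` is a word in the letters `a1, a2, a3`. -/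
def Aword (l : List Phi) : Prop := ∀ x ∈ l, isA x

/-- `l` is square-free: it contains no factor `Y ++ Y` with `Y` nonempty. -/
def SqFree (l : List Phi) : Prop := ∀ Y : List Phi, Y ≠ [] → ¬ (Y ++ Y) <:+: l

/-- The non-zero defining relations of `H` (relations (2),(3),(5)–(11),(13),(14)). -/
inductive relNZ : W0 → W0 → Prop
  | r2 : relNZ (w [L]) (w [M, P, g])
  | r3 (i : Fin 3) : relNZ (w [g, ai i]) (w [ai i, g])
  | r5 (i j : Fin 3) : relNZ (w [ai i, g, ai j]) (w [ai i, R, s1, Q, ai j])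
  | r6 (i : Fin 3) (x : Phi) (h : x = R ∨ isA x) : relNZ (w [ti i, x]) (w [x, ti i])
  | r7 (i : Fin 3) : relNZ (w [P, ai i, ti i]) (w [ai i, P, s1])
  | r8 (i j : Fin 3) (h : i ≠ j) : relNZ (w [P, ai j, ti i]) (w [ai j, P, s2])
  | r9 (i : Fin 3) (j : Fin 2) : relNZ (w [si j, ai i]) (w [ai i, si j])
  | r10 : relNZ (w [s1, R]) (w [R, s1])
  | r11 (i : Fin 3) : relNZ (w [s1, Q, ai i]) (w [ti i, ai i, Q])
  | r13 (i : Fin 3) : relNZ (w [s2, R, ai i]) (w [ai i, s2, R])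
  | r14 (i : Fin 3) : relNZ (w [s2, R, Q, ai i]) (w [R, ti i, ai i, Q])

/-- The invariants `I0, I1, I2, I3, I4` of a word. -/
def I : Fin 5 → List Phi → ℕ
  | 0, l => l.count L + l.count M
  | 1, l => l.count L + l.count P
  | 2, l => l.count L + l.count g + l.count R
  | 3, l => l.count L + l.count g + l.count Q
  | 4, l => l.count L + l.count g + l.count t1 + l.count t2 + l.count t3
              + l.count s1 + l.count s2

/-! Each invariant counts the letters of a word that lie in a fixed set, so it is a monoid
homomorphism from words to `(ℕ, +)`. Both sides of every non-zero relation contain the same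
number of such letters, hence the congruence they generate lies in its kernel. -/

section

variable {α : Type*} (p : α → Prop) [DecidablePred p]

theorem WithZero.map'_countP_ofList (l : List α) :
    WithZero.map' (FreeMonoid.countP p) (FreeMonoid.ofList l : FreeMonoid α) =
      (Multiplicative.ofAdd (l.countP p) : Multiplicative ℕ) :=
  rfl

theorem List.countP_eq_of_conGen {r : WithZero (FreeMonoid α) → WithZero (FreeMonoid α) → Prop}
    (hr : r ≤ Con.ker (WithZero.map' (FreeMonoid.countP p))) {l l' : List α}
    (h : conGen r (FreeMonoid.ofList l : FreeMonoid α) (FreeMonoid.ofList l' : FreeMonoid α)) :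
    l.countP p = l'.countP p := by
  have := Con.conGen_le.2 hr h
  rw [Con.ker_rel, WithZero.map'_countP_ofList, WithZero.map'_countP_ofList,
    WithZero.coe_inj] at this
  exact Multiplicative.ofAdd.injective this

end

def invariantLetters : Fin 5 → Finset Phi
  | 0 => {L, M}
  | 1 => {L, P}
  | 2 => {L, g, R}
  | 3 => {L, g, Q}
  | 4 => {L, g, t1, t2, t3, s1, s2}

theorem I_eq_countP (m : Fin 5) (l : List Phi) : I m l = l.countP (· ∈ invariantLetters m) := by
  induction l with
  | nil => fin_cases m <;> rfl
  | cons x l ih =>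
    rw [List.countP_cons, ← ih]
    fin_cases m <;> cases x <;> simp [I, invariantLetters] <;> omega

theorem relNZ_le_ker (m : Fin 5) :
    relNZ ≤ Con.ker (WithZero.map' (FreeMonoid.countP (· ∈ invariantLetters m))) := by
  intro _ _ h
  rw [Con.ker_rel]
  cases h
  case r6 i x _ =>
    simp only [w, WithZero.map'_countP_ofList, (List.Perm.swap x (ti i) []).countP_eq]
  all_goals
    simp only [w, WithZero.map'_countP_ofList]
    decide +revert

/-- the quantities `I0,…,I4` are invariant under the congruence generated
by the non-zero defining relations of `H`. -/
theorem stmt9 (W W' : List Phi) (h : conGen relNZ (w W) (w W')) (m : Fin 5) :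
    I m W = I m W' := by
  rw [I_eq_countP, I_eq_countP]
  exact List.countP_eq_of_conGen _ (relNZ_le_ker m) h
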